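/- In Cl(15,0), the element (1 + Φ*)/16 is idempotent, where Φ* = e_{12478BDE} + e_{12479ACF} + e_{12568BCF} + e_{12569ADE} + e_{13468ADF} + e_{13469BCE} + e_{13578ACE} + e_{13579BDF} + e_{234589EF} + e_{2345ABCD} + e_{236789CD} + e_{2367ABEF} + e_{456789AB} + e_{4567CDEF} + e_{89ABCDEF}. -/

import Mathlib

noncomputable def Q15 : QuadraticForm ℝ (Fin 15 → ℝ) :=
  QuadraticMap.weightedSumSquares ℝ (fun _ : Fin 15 => (1 : ℝ))

noncomputable def e15 (i : Fin 15) : CliffordAlgebra Q15 :=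
  CliffordAlgebra.ι Q15 (Pi.single i 1)

/-- Product of generators with the given (0-based) indices;
hexadecimal index k of the paper corresponds to k-1 here. -/
noncomputable def p15 (l : List (Fin 15)) : CliffordAlgebra Q15 := (l.map e15).prod

/-- Φ_A = e1234567. -/
noncomputable def ΦA : CliffordAlgebra Q15 := p15 [0,1,2,3,4,5,6]

/-- Φ_O = e_{12389AB} + e_{14589CD} + e_{16789EF} + e_{2468ACE} + e_{2578ADF}
  + e_{3478BCF} + e_{3568BDE}. -/
noncomputable def ΦO : CliffordAlgebra Q15 :=
  p15 [0,1,2,7,8,9,10] + p15 [0,3,4,7,8,11,12] + p15 [0,5,6,7,8,13,14]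
    + p15 [1,3,5,7,9,11,13] + p15 [1,4,6,7,9,12,14] + p15 [2,3,6,7,10,11,14]
    + p15 [2,4,5,7,10,12,13]

/-- Φ_P = e_{123CDEF} + e_{145ABEF} + e_{167ABCD} + e_{2469BDF} + e_{2579BCE}
  + e_{3479ADE} + e_{3569ACF}. -/
noncomputable def ΦP : CliffordAlgebra Q15 :=
  p15 [0,1,2,11,12,13,14] + p15 [0,3,4,9,10,13,14] + p15 [0,5,6,9,10,11,12]
    + p15 [1,3,5,8,10,12,14] + p15 [1,4,6,8,10,11,13] + p15 [2,3,6,8,9,12,13]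
    + p15 [2,4,5,8,9,11,14]

/-- The pseudoscalar e_{123456789ABCDEF}. -/
noncomputable def ω15 : CliffordAlgebra Q15 :=
  p15 [0,1,2,3,4,5,6,7,8,9,10,11,12,13,14]

/-- The co-associative 8-form calibration Φ* (dual of Φ). -/
noncomputable def Φstar : CliffordAlgebra Q15 :=
  p15 [0,1,3,6,7,10,12,13] + p15 [0,1,3,6,8,9,11,14] + p15 [0,1,4,5,7,10,11,14]
    + p15 [0,1,4,5,8,9,12,13] + p15 [0,2,3,5,7,9,12,14] + p15 [0,2,3,5,8,10,11,13]
    + p15 [0,2,4,6,7,9,11,13] + p15 [0,2,4,6,8,10,12,14] + p15 [1,2,3,4,7,8,13,14]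
    + p15 [1,2,3,4,9,10,11,12] + p15 [1,2,5,6,7,8,11,12] + p15 [1,2,5,6,9,10,13,14]
    + p15 [3,4,5,6,7,8,9,10] + p15 [3,4,5,6,11,12,13,14] + p15 [7,8,9,10,11,12,13,14]

/-! The four 8-blades e_{12478BDE}, e_{12479ACF}, e_{12568BCF}, e_{13468ADF} pairwise commute and
square to 1, and the products of their 16 subsets are exactly 1 and the 15 terms of Φ*, all with
sign +. Hence 1 + Φ* = ∏ (1 + xᵢ), so (1 + Φ*)/16 = ∏ (1 + xᵢ)/2 is a product of commuting
idempotents. -/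

theorem isIdempotentElem_smul_prod_one_add {K A : Type*} [Field K] [Ring A] [Algebra K A]
    (h2 : (2 : K) ≠ 0) {l : List A} (hcomm : l.Pairwise Commute) (hsq : ∀ x ∈ l, x * x = 1) :
    IsIdempotentElem ((2⁻¹ : K) ^ l.length • (l.map (1 + ·)).prod) := by
  induction l with
  | nil => simpa using IsIdempotentElem.one
  | cons x t ih =>
    rw [List.pairwise_cons] at hcomm
    have hx : IsIdempotentElem ((2⁻¹ : K) • (1 + x)) := by
      have hx2 : (1 + x) * (1 + x) = (2 : K) • (1 + x) := by
        rw [two_smul, add_mul, mul_add, mul_add, hsq x List.mem_cons_self]; noncomm_ring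
      rw [IsIdempotentElem, smul_mul_smul_comm, hx2, smul_smul, inv_mul_cancel_right₀ h2]
    have hxt : Commute x (t.map (1 + ·)).prod :=
      Commute.list_prod_right _ _ fun y hy => by
        obtain ⟨z, hz, rfl⟩ := List.mem_map.1 hy
        exact (Commute.one_right x).add_right (hcomm.1 z hz)
    rw [List.length_cons, List.map_cons, List.prod_cons, pow_succ', ← smul_mul_smul_comm]
    exact hx.mul_of_commute ((((Commute.one_left _).add_left hxt).smul_left _).smul_right _)
      (ih hcomm.2 fun y hy => hsq y (List.mem_cons_of_mem x hy))

theorem Q15_apply (v : Fin 15 → ℝ) : Q15 v = ∑ i, v i * v i := by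
  simp [Q15, QuadraticMap.weightedSumSquares_apply]

theorem e15_mul_self (i : Fin 15) : e15 i * e15 i = 1 := by
  simp [e15, CliffordAlgebra.ι_sq_scalar, Q15_apply, Pi.single_apply]

theorem e15_mul_e15_mul_self (i : Fin 15) (x : CliffordAlgebra Q15) : e15 i * (e15 i * x) = x := by
  rw [← mul_assoc, e15_mul_self, one_mul]

theorem isOrtho_Q15_single {i j : Fin 15} (h : i ≠ j) :
    Q15.IsOrtho (Pi.single i 1) (Pi.single j 1) := by
  rw [QuadraticMap.isOrtho_def]
  simp [Q15_apply, Pi.single_apply, mul_add, Finset.sum_add_distrib, Finset.sum_ite_eq', h, h.symm]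

theorem e15_mul_e15_of_lt {i j : Fin 15} (h : j < i) : e15 i * e15 j = -(e15 j * e15 i) :=
  CliffordAlgebra.ι_mul_ι_comm_of_isOrtho (isOrtho_Q15_single h.ne')

theorem e15_mul_e15_mul_of_lt {i j : Fin 15} (h : j < i) (x : CliffordAlgebra Q15) :
    e15 i * (e15 j * x) = -(e15 j * (e15 i * x)) :=
  CliffordAlgebra.ι_mul_ι_mul_of_isOrtho x (isOrtho_Q15_single h.ne')

noncomputable def ΦstarGenerators : List (CliffordAlgebra Q15) :=
  [p15 [0,1,3,6,7,10,12,13], p15 [0,1,3,6,8,9,11,14], p15 [0,1,4,5,7,10,11,14],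
    p15 [0,2,3,5,7,9,12,14]]

theorem ΦstarGenerators_pairwise_commute : ΦstarGenerators.Pairwise Commute := by
  simp [ΦstarGenerators, p15, Commute, SemiconjBy, mul_assoc,
    e15_mul_e15_mul_of_lt, e15_mul_e15_of_lt, e15_mul_self]

theorem ΦstarGenerators_mul_self : ∀ x ∈ ΦstarGenerators, x * x = 1 := by
  simp [ΦstarGenerators, p15, mul_assoc, e15_mul_e15_mul_of_lt, e15_mul_self]

theorem one_add_Φstar_eq_prod : 1 + Φstar = (ΦstarGenerators.map (1 + ·)).prod := by
  simp [ΦstarGenerators, Φstar, p15, mul_add, add_mul, mul_assoc,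
    e15_mul_e15_mul_of_lt, e15_mul_e15_mul_self, e15_mul_e15_of_lt, e15_mul_self]
  abel

/-- (1 + Φ*)/16 is idempotent. -/
theorem stmt19 : IsIdempotentElem ((16 : ℝ)⁻¹ • (1 + Φstar)) := by
  have h := isIdempotentElem_smul_prod_one_add (K := ℝ) two_ne_zero
    ΦstarGenerators_pairwise_commute ΦstarGenerators_mul_self
  rwa [← one_add_Φstar_eq_prod, show ΦstarGenerators.length = 4 from rfl,
    show (2⁻¹ : ℝ) ^ 4 = 16⁻¹ by norm_num] at h
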